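/- arXiv:1901.00077 — 5 statements merged into one kernel-verified Lean document; each statement's English description precedes it below -/
import Mathlib

section
/- Fix n ∈ ℤ, n ≠ 0, and let A be the algebra of finitely supported functions ℤ → ℂ under pointwise product. If d̃ : A → ℓ^∞(ℤ) is linear and satisfies d̃(ab)(k) = d̃(a)(k)b(k) + a(k+n)d̃(b)(k), then there exists a function β : ℤ → ℂ such that d̃(a)(k) = β(k)·(a(k) - a(k+n)) for all a ∈ A and k ∈ ℤ. -/
/-!
Multiplying by the indicator `δₖ` of `{k}` and evaluating at `k` gives `a * δₖ = a k • δₖ`,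
so the twisted Leibniz rule with `b = δₖ` reads
`a k * d δₖ k = d a k + a (k + n) * d δₖ k`. Hence `β k := d δₖ k` works.
-/

namespace Finsupp

theorem mul_single_one {ι R : Type*} [MulZeroOneClass R] (a : ι →₀ R) (k : ι) :
    a * single k 1 = single k (a k) := by
  classical
  ext j
  rw [mul_apply, single_apply, single_apply]
  split_ifs with h
  · rw [h, mul_one]
  · rw [mul_zero]

theorem apply_eq_mul_sub_of_twisted_leibniz {ι R : Type*} [CommRing R] (σ : ι → ι)
    (d : (ι →₀ R) →ₗ[R] (ι → R))
    (hleib : ∀ (a b : ι →₀ R) (k : ι), d (a * b) k = d a k * b k + a (σ k) * d b k)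
    (a : ι →₀ R) (k : ι) :
    d a k = d (single k 1) k * (a k - a (σ k)) := by
  have h := hleib a (single k 1) k
  rw [mul_single_one, ← smul_single_one, map_smul, Pi.smul_apply, smul_eq_mul,
    single_eq_same, mul_one] at h
  linear_combination -h

end Finsupp

theorem twisted_derivation_classification_general (n : ℤ)
    (d : (ℤ →₀ ℂ) →ₗ[ℂ] (ℤ → ℂ))
    (hleib : ∀ (a b : ℤ →₀ ℂ) (k : ℤ),
      d (a * b) k = d a k * b k + a (k + n) * d b k) :
    ∃ β : ℤ → ℂ, ∀ (a : ℤ →₀ ℂ) (k : ℤ), d a k = β k * (a k - a (k + n)) :=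
  ⟨fun k => d (Finsupp.single k 1) k,
    Finsupp.apply_eq_mul_sub_of_twisted_leibniz (· + n) d hleib⟩

/-- for `n ≠ 0`, any linear map `d̃` on the algebra of finitely
supported functions `ℤ → ℂ` (pointwise product) into bounded functions
satisfying the twisted Leibniz rule `d̃(ab)(k) = d̃(a)(k)b(k) + a(k+n)d̃(b)(k)`
is of the form `d̃(a)(k) = β(k)(a(k) - a(k+n))` for some `β : ℤ → ℂ`. -/
theorem twisted_derivation_classification (n : ℤ) (hn : n ≠ 0)
    (d : (ℤ →₀ ℂ) →ₗ[ℂ] (ℤ → ℂ))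
    (hbd : ∀ a : ℤ →₀ ℂ, ∃ C : ℝ, ∀ k : ℤ, ‖d a k‖ ≤ C)
    (hleib : ∀ (a b : ℤ →₀ ℂ) (k : ℤ),
      d (a * b) k = d a k * b k + a (k + n) * d b k) :
    ∃ β : ℤ → ℂ, ∀ (a : ℤ →₀ ℂ) (k : ℤ), d a k = β k * (a k - a (k + n)) :=
  twisted_derivation_classification_general n d hleib
end

section
/- Let β : ℤ → ℝ satisfy β(k) > 0 for all k, and let m² > 0. Fix n ∈ ℤ. On ℓ²(ℤ) define the diagonal operator D by (Dg)(k) = (β(k+n) + β(-k))·g(k). Then D is injective on its natural domain, and for every finitely supported f : ℤ → ℂ with f(k) = 0 whenever n + 2k < 0, setting g(k) = f(k)/(β(k+n) + β(-k)), one has ∑_{k∈ℤ} conj(f(-k-n))·g(k) = (1/2)·[if n is even then |f(-n/2)|²/β(n/2) else 0] ≥ 0. -/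
open scoped ComplexConjugate

/-!
Since `f` vanishes on `{n + 2k < 0}`, so does `g`, while `k ↦ f (-k - n)` vanishes on
`{n + 2k > 0}`. Hence every term of the pairing vanishes except the one on the reflection
line `n + 2k = 0`, which exists only for `n` even, where the symbol equals `2 β (n/2)`.
-/

theorem eq_of_forall_mul_eq_mul {ι M : Type*} [MonoidWithZero M] [IsLeftCancelMulZero M]
    {d g₁ g₂ : ι → M} (hd : ∀ k, d k ≠ 0) (h : ∀ k, d k * g₁ k = d k * g₂ k) : g₁ = g₂ :=
  funext fun k => mul_left_cancel₀ (hd k) (h k)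

theorem conj_reflect_mul_eq_zero {n k : ℤ} {f g : ℤ → ℂ} (hf : ∀ k, n + 2 * k < 0 → f k = 0)
    (hg : ∀ k, f k = 0 → g k = 0) (hk : n + 2 * k ≠ 0) : conj (f (-k - n)) * g k = 0 := by
  rcases hk.lt_or_gt with hk | hk
  · rw [hg k (hf k hk), mul_zero]
  · rw [hf (-k - n) (by omega), map_zero, zero_mul]

theorem conj_mul_div_ofReal_add_self (z : ℂ) (b : ℝ) :
    conj z * (z / ((b + b : ℝ) : ℂ)) = ((1 / 2 * (‖z‖ ^ 2 / b) : ℝ) : ℂ) := by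
  rw [mul_div_assoc', Complex.conj_mul']
  push_cast
  ring

theorem tsum_conj_reflect_mul (n : ℤ) (β : ℤ → ℝ) {f : ℤ → ℂ}
    (hf : ∀ k, n + 2 * k < 0 → f k = 0) :
    (∑' k : ℤ, conj (f (-k - n)) * (f k / ((β (k + n) + β (-k) : ℝ) : ℂ))) =
      (((1 / 2) * (if Even n then ‖f (-(n / 2))‖ ^ 2 / β (n / 2) else 0) : ℝ) : ℂ) := by
  have hzero (k : ℤ) (hk : n + 2 * k ≠ 0) :
      conj (f (-k - n)) * (f k / ((β (k + n) + β (-k) : ℝ) : ℂ)) = 0 :=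
    conj_reflect_mul_eq_zero (g := fun k => f k / _) hf (fun k hk => by rw [hk, zero_div]) hk
  by_cases hn : Even n
  · obtain ⟨m, rfl⟩ := hn
    rw [tsum_eq_single (-m) fun k hk => hzero k (by omega), if_pos ⟨m, rfl⟩,
      show (m + m) / 2 = m by omega, show -(-m) - (m + m) = -m by ring,
      show -m + (m + m) = m by ring, neg_neg, conj_mul_div_ofReal_add_self]
  · rw [if_neg hn, mul_zero, Complex.ofReal_zero]
    exact (tsum_congr fun k => hzero k fun hk => hn ⟨-k, by omega⟩).trans tsum_zero

theorem reflection_positivity_invariant_general (n : ℤ) (β : ℤ → ℝ)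
    (hβ : ∀ k : ℤ, 0 < β k)
    (f : ℤ →₀ ℂ) (hf : ∀ k : ℤ, n + 2 * k < 0 → f k = 0)
    (g : ℤ → ℂ) (hg : ∀ k : ℤ, g k = f k / ((β (k + n) + β (-k) : ℝ) : ℂ)) :
    (∀ g₁ g₂ : ℤ → ℂ,
       (∀ k : ℤ, ((β (k + n) + β (-k) : ℝ) : ℂ) * g₁ k =
         ((β (k + n) + β (-k) : ℝ) : ℂ) * g₂ k) → g₁ = g₂) ∧
    (∑' k : ℤ, conj (f (-k - n)) * g k) =
      (((1 / 2) * (if Even n then ‖f (-(n / 2))‖ ^ 2 / β (n / 2) else 0) : ℝ) : ℂ) ∧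
    0 ≤ (1 / 2) * (if Even n then ‖f (-(n / 2))‖ ^ 2 / β (n / 2) else 0) := by
  have hD (k : ℤ) : ((β (k + n) + β (-k) : ℝ) : ℂ) ≠ 0 :=
    Complex.ofReal_ne_zero.mpr (add_pos (hβ _) (hβ _)).ne'
  refine ⟨fun g₁ g₂ => eq_of_forall_mul_eq_mul hD, ?_, ?_⟩
  · rw [← tsum_conj_reflect_mul n β hf]
    simp only [hg]
  · refine mul_nonneg (by norm_num) ?_
    split_ifs
    exacts [div_nonneg (sq_nonneg _) (hβ _).le, le_rfl]

/-- invariant-case reflection positivity on a single rotational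
component. With `β > 0`, the diagonal operator `D` with symbol
`β(k+n) + β(-k)` is injective, and for finitely supported `f` vanishing on
`{n + 2k < 0}`, with `g = D⁻¹ f`, the pairing `∑ conj(f(-k-n)) g(k)` equals the
nonnegative boundary term `(1/2)|f(-n/2)|²/β(n/2)` (for `n` even; `0` for `n` odd). -/
theorem reflection_positivity_invariant (n : ℤ) (β : ℤ → ℝ)
    (hβ : ∀ k : ℤ, 0 < β k) (m2 : ℝ) (hm2 : 0 < m2)
    (f : ℤ →₀ ℂ) (hf : ∀ k : ℤ, n + 2 * k < 0 → f k = 0)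
    (g : ℤ → ℂ) (hg : ∀ k : ℤ, g k = f k / ((β (k + n) + β (-k) : ℝ) : ℂ)) :
    (∀ g₁ g₂ : ℤ → ℂ,
       (∀ k : ℤ, ((β (k + n) + β (-k) : ℝ) : ℂ) * g₁ k =
         ((β (k + n) + β (-k) : ℝ) : ℂ) * g₂ k) → g₁ = g₂) ∧
    (∑' k : ℤ, conj (f (-k - n)) * g k) =
      (((1 / 2) * (if Even n then ‖f (-(n / 2))‖ ^ 2 / β (n / 2) else 0) : ℝ) : ℂ) ∧
    0 ≤ (1 / 2) * (if Even n then ‖f (-(n / 2))‖ ^ 2 / β (n / 2) else 0) :=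
  reflection_positivity_invariant_general n β hβ f hf g hg
end

section
/- Let β : ℤ → ℝ with β(k) > 0 for all k. Define on the weighted space H = ℓ²(ℤ²) the operator D_β by (D_β f)(n,k) = (β(k+n) + β(-k))·f(n,k), and Θ by (Θf)(n,k) = f(n,-k-n). For every f ∈ H supported on {(n,k) : n+2k ≥ 0} such that g defined by g(n,k) = f(n,k)/(β(k+n)+β(-k)) lies in H, one has ⟨Θf, g⟩ = (1/2)·∑_{n even} |f(n, -n/2)|²·β(n/2)^{-1} ≥ 0. -/
/-!
Both `Θ f` and `g` are supported on half-planes of `ℤ²`: `g` on `{n + 2k ≥ 0}` like `f`, and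
`Θ f` on the mirror image `{n + 2k ≤ 0}`, since `(n, k) ↦ (n, -k - n)` negates `n + 2k`. The
pointwise products in `⟨Θ f, g⟩` therefore live on the line `n + 2k = 0`, which meets `ℤ²` only
over even `n`, at `k = -n/2`. There `Θ` fixes the point and both weights equal `β (n/2)`, so each
term is `|f(n, -n/2)|² / (2 β(n/2)) ≥ 0`.
-/

open scoped InnerProductSpace

theorem lp.inner_eq_tsum_tsum {𝕜 α β : Type*} [RCLike 𝕜] {E : α × β → Type*}
    [∀ p, NormedAddCommGroup (E p)] [∀ p, InnerProductSpace 𝕜 (E p)] (f g : lp E 2) :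
    ⟪f, g⟫_𝕜 = ∑' (a) (b), ⟪f (a, b), g (a, b)⟫_𝕜 :=
  (lp.inner_eq_tsum f g).trans <|
    Summable.tsum_prod (f := fun p => ⟪f p, g p⟫_𝕜) (lp.summable_inner f g)

theorem tsum_eq_ite_even_of_eq_zero_off_neg_half {M : Type*} [AddCommMonoid M]
    [TopologicalSpace M] {n : ℤ} {u : ℤ → M} (hu : ∀ k, n + 2 * k ≠ 0 → u k = 0) :
    ∑' k, u k = if Even n then u (-(n / 2)) else 0 := by
  split_ifs with hn
  · exact tsum_eq_single _ fun k hk => hu k (by omega)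
  · rw [Int.not_even_iff] at hn
    rw [tsum_congr fun k => hu k (by omega), tsum_zero]

theorem Complex.inner_div_ofReal_add_self (z : ℂ) (b : ℝ) :
    ⟪z, z / ((b + b : ℝ) : ℂ)⟫_ℂ = ((1 / 2 * (‖z‖ ^ 2 * b⁻¹) : ℝ) : ℂ) := by
  rw [RCLike.inner_apply', mul_div_assoc', Complex.conj_mul']
  push_cast
  ring

/-- invariant-case reflection positivity on the quantum cylinder.
With `β > 0`, `Θ` the reflection of `ℓ²(ℤ²)`, `f` supported on `{n+2k ≥ 0}` and
`g = D_β⁻¹ f ∈ ℓ²` (i.e. `g(n,k) = f(n,k)/(β(k+n)+β(-k))`), we have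
`⟨Θf, g⟩ = (1/2) ∑_{n even} |f(n,-n/2)|² β(n/2)⁻¹ ≥ 0`. -/
theorem reflection_positivity_invariant_cylinder (β : ℤ → ℝ)
    (hβ : ∀ k : ℤ, 0 < β k)
    (Θ : lp (fun _ : ℤ × ℤ => ℂ) 2 →L[ℂ] lp (fun _ : ℤ × ℤ => ℂ) 2)
    (hΘ : ∀ (f : lp (fun _ : ℤ × ℤ => ℂ) 2) (n k : ℤ), (Θ f) (n, k) = f (n, -k - n))
    (f g : lp (fun _ : ℤ × ℤ => ℂ) 2)
    (hf : ∀ n k : ℤ, n + 2 * k < 0 → f (n, k) = 0)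
    (hg : ∀ n k : ℤ, g (n, k) = f (n, k) / ((β (k + n) + β (-k) : ℝ) : ℂ)) :
    inner (𝕜 := ℂ) (Θ f) g =
      (((1 / 2) * ∑' n : ℤ, (if Even n then ‖f (n, -(n / 2))‖ ^ 2 * (β (n / 2))⁻¹ else 0) : ℝ) : ℂ) ∧
    0 ≤ (1 / 2) * ∑' n : ℤ, (if Even n then ‖f (n, -(n / 2))‖ ^ 2 * (β (n / 2))⁻¹ else 0) := by
  have hdiag : ∀ n k, n + 2 * k ≠ 0 → ⟪Θ f (n, k), g (n, k)⟫_ℂ = 0 := by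
    intro n k hnk
    rcases hnk.lt_or_gt with hneg | hpos
    · rw [hg, hf n k hneg, zero_div, inner_zero_right]
    · rw [hΘ, hf n (-k - n) (by omega), inner_zero_left]
  have hrow : ∀ n, ∑' k, ⟪Θ f (n, k), g (n, k)⟫_ℂ =
      (((1 / 2) * if Even n then ‖f (n, -(n / 2))‖ ^ 2 * (β (n / 2))⁻¹ else 0 : ℝ) : ℂ) := by
    intro n
    rw [tsum_eq_ite_even_of_eq_zero_off_neg_half (hdiag n)]
    split_ifs with hn
    · obtain ⟨m, rfl⟩ := hn
      rw [hΘ, hg, show (m + m) / 2 = m by omega, show -(-m) - (m + m) = -m by ring,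
        show -m + (m + m) = m by ring, neg_neg, Complex.inner_div_ofReal_add_self]
    · simp
  have hterms_nonneg : 0 ≤ ∑' n : ℤ,
      (if Even n then ‖f (n, -(n / 2))‖ ^ 2 * (β (n / 2))⁻¹ else 0) :=
    tsum_nonneg fun n => by split_ifs <;> positivity [hβ (n / 2)]
  refine ⟨?_, mul_nonneg (by norm_num) hterms_nonneg⟩
  rw [lp.inner_eq_tsum_tsum, tsum_congr hrow, ← Complex.ofReal_tsum, tsum_mul_left]
end

section
/- Fix n ∈ ℤ even, β : ℤ → ℂ, m² > 0, and let g : ℤ → ℂ be finitely supported such that (Δ_n + m²)g(k) = 0 for all k with n + 2k < 0, where (Δ_n g)(k) = (|β(k+n)|² + |β(-k)|²)g(k) - conj(β(k+n))β(-k-1)g(k+1) - β(k+n-1)conj(β(-k))g(k-1). Then ∑_{n+2k<0} |β(k+n)g(k) - β(-k-1)g(k+1)|² + m²∑_{n+2k<0}|g(k)|² = |β(n/2)|²·|g(-n/2)|² - β(n/2-1)·conj(β(n/2))·g(-n/2-1)·conj(g(-n/2)). -/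
open scoped ComplexConjugate

noncomputable section

/-- The Jacobi-type operator `Δ_n` of the covariant Laplacian. -/
def DeltaN (n : ℤ) (β : ℤ → ℂ) (g : ℤ → ℂ) : ℤ → ℂ := fun k =>
  ((‖β (k + n)‖ ^ 2 + ‖β (-k)‖ ^ 2 : ℝ) : ℂ) * g k
    - conj (β (k + n)) * β (-k - 1) * g (k + 1)
    - β (k + n - 1) * conj (β (-k)) * g (k - 1)

private lemma conj_mul_self' (z : ℂ) : ((‖z‖ : ℝ) : ℂ) ^ 2 = conj z * z := by
  rw [mul_comm, Complex.mul_conj, Complex.normSq_eq_norm_sq]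
  norm_cast

private lemma sum_telescope' (G : ℤ → ℂ) (M : ℤ) :
    ∀ K, M ≤ K → ∑ k ∈ Finset.Ico M K, (G (k + 1) - G k) = G K - G M :=
  Int.le_induction (by simp) (fun K _ ih => by
    have hins : Finset.Ico M (K + 1) = insert K (Finset.Ico M K) := by
      ext x; simp; omega
    rw [hins, Finset.sum_insert (by simp), ih]; ring)

/-- boundary-term identity for `Σ₁` in the even case. -/
theorem sigma_one_boundary_even (n : ℤ) (hn : Even n) (β : ℤ → ℂ)
    (m2 : ℝ) (hm2 : 0 < m2) (g : ℤ →₀ ℂ)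
    (hg : ∀ k : ℤ, n + 2 * k < 0 → DeltaN n β (⇑g) k + (m2 : ℂ) * g k = 0) :
    (∑' k : ℤ, (if n + 2 * k < 0 then
        ((‖β (k + n) * g k - β (-k - 1) * g (k + 1)‖ ^ 2 : ℝ) : ℂ) else 0))
      + (m2 : ℂ) * ∑' k : ℤ, (if n + 2 * k < 0 then ((‖g k‖ ^ 2 : ℝ) : ℂ) else 0) =
    ((‖β (n / 2)‖ ^ 2 : ℝ) : ℂ) * ((‖g (-(n / 2))‖ ^ 2 : ℝ) : ℂ)
      - β (n / 2 - 1) * conj (β (n / 2)) * g (-(n / 2) - 1) * conj (g (-(n / 2))) := by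
  obtain ⟨t, ht⟩ := hn
  set K : ℤ := -(n / 2) with hK
  have hKt : n / 2 = t := by omega
  have hcond : ∀ k : ℤ, (n + 2 * k < 0) ↔ k < K := by intro k; omega
  -- a lower bound M below the support of g and below K
  obtain ⟨M, hMK, hM0⟩ : ∃ M : ℤ, M ≤ K ∧ ∀ k ≤ M, g k = 0 := by
    have hne : (insert K g.support).Nonempty := ⟨K, Finset.mem_insert_self _ _⟩
    refine ⟨(insert K g.support).min' hne - 1, ?_, ?_⟩
    · have := Finset.min'_le (insert K g.support) K (Finset.mem_insert_self _ _)
      omega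
    · intro k hk
      by_contra h0
      have hks : k ∈ insert K g.support :=
        Finset.mem_insert_of_mem (Finsupp.mem_support_iff.mpr h0)
      have := Finset.min'_le _ _ hks
      omega
  -- the telescoping function
  set G : ℤ → ℂ := fun k =>
    conj (β (-k)) * β (-k) * conj (g k) * g k
      - β (k + n - 1) * conj (β (-k)) * g (k - 1) * conj (g k) with hG
  -- reduce tsums to finite sums over Ico M K
  have h1 : (∑' k : ℤ, (if n + 2 * k < 0 then
        ((‖β (k + n) * g k - β (-k - 1) * g (k + 1)‖ ^ 2 : ℝ) : ℂ) else 0))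
      = ∑ k ∈ Finset.Ico M K, (if n + 2 * k < 0 then
        ((‖β (k + n) * g k - β (-k - 1) * g (k + 1)‖ ^ 2 : ℝ) : ℂ) else 0) := by
    refine tsum_eq_sum ?_
    intro k hk
    simp only [Finset.mem_Ico, not_and_or, not_le, not_lt] at hk
    rcases hk with hk | hk
    · have h1 : g k = 0 := hM0 k (by omega)
      have h2 : g (k + 1) = 0 := hM0 (k + 1) (by omega)
      simp [h1, h2]
    · rw [if_neg (by omega)]
  have h2 : (∑' k : ℤ, (if n + 2 * k < 0 then ((‖g k‖ ^ 2 : ℝ) : ℂ) else 0))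
      = ∑ k ∈ Finset.Ico M K, (if n + 2 * k < 0 then ((‖g k‖ ^ 2 : ℝ) : ℂ) else 0) := by
    refine tsum_eq_sum ?_
    intro k hk
    simp only [Finset.mem_Ico, not_and_or, not_le, not_lt] at hk
    rcases hk with hk | hk
    · simp [hM0 k (by omega)]
    · rw [if_neg (by omega)]
  rw [h1, h2, Finset.mul_sum, ← Finset.sum_add_distrib]
  have hsum : ∀ k ∈ Finset.Ico M K,
      ((if n + 2 * k < 0 then
        ((‖β (k + n) * g k - β (-k - 1) * g (k + 1)‖ ^ 2 : ℝ) : ℂ) else 0)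
        + (m2 : ℂ) * (if n + 2 * k < 0 then ((‖g k‖ ^ 2 : ℝ) : ℂ) else 0))
      = G (k + 1) - G k := by
    intro k hk
    simp only [Finset.mem_Ico] at hk
    have hklt : n + 2 * k < 0 := by omega
    rw [if_pos hklt, if_pos hklt]
    have heq := hg k hklt
    simp only [DeltaN] at heq
    push_cast at heq ⊢
    simp only [conj_mul_self'] at heq ⊢
    simp only [hG, map_sub, map_mul]
    have hw : (-(k + 1) : ℤ) = -k - 1 := by ring
    have hw2 : (k + 1 + n - 1 : ℤ) = k + n := by ring
    have hw3 : (k + 1 - 1 : ℤ) = k := by ring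
    rw [hw, hw2, hw3]
    linear_combination conj (g k) * heq
  rw [Finset.sum_congr rfl hsum, sum_telescope' G M K hMK]
  have hGM : G M = 0 := by simp [hG, hM0 M le_rfl]
  have hGK : G K = ((‖β (n / 2)‖ ^ 2 : ℝ) : ℂ) * ((‖g K‖ ^ 2 : ℝ) : ℂ)
      - β (n / 2 - 1) * conj (β (n / 2)) * g (K - 1) * conj (g K) := by
    have e1 : (-K : ℤ) = n / 2 := by omega
    have e2 : (K + n - 1 : ℤ) = n / 2 - 1 := by omega
    simp only [hG, e1, e2]
    push_cast
    simp only [conj_mul_self']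
    ring
  rw [hGM, hGK]
  ring
end
end

section
/- Fix n ∈ ℤ odd, β : ℤ → ℂ, m² > 0, and let g : ℤ → ℂ be finitely supported with (Δ_n + m²)g(k) = 0 for all k with n + 2k < 0, where Δ_n is as in the covariant Laplacian: (Δ_n g)(k) = (|β(k+n)|² + |β(-k)|²)g(k) - conj(β(k+n))β(-k-1)g(k+1) - β(k+n-1)conj(β(-k))g(k-1). Then the quantity y = |β((n-1)/2)|²·conj(g((1-n)/2))·g((-n-1)/2) is real, i.e. y = conj(y). -/
open scoped ComplexConjugate

noncomputable section

/-- in the odd case, the boundary quantity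
`y = |β((n-1)/2)|² conj(g((1-n)/2)) g((-n-1)/2)` is real. -/
theorem boundary_term_real_odd (n : ℤ) (hn : Odd n) (β : ℤ → ℂ)
    (m2 : ℝ) (hm2 : 0 < m2) (g : ℤ →₀ ℂ)
    (hg : ∀ k : ℤ, n + 2 * k < 0 → DeltaN n β (⇑g) k + (m2 : ℂ) * g k = 0) :
    ((‖β ((n - 1) / 2)‖ ^ 2 : ℝ) : ℂ) * conj (g ((1 - n) / 2)) * g ((-n - 1) / 2) =
      conj (((‖β ((n - 1) / 2)‖ ^ 2 : ℝ) : ℂ) * conj (g ((1 - n) / 2)) * g ((-n - 1) / 2)) := by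
  obtain ⟨t, ht⟩ := hn
  -- the "flux" F
  set F : ℤ → ℂ := fun k =>
    conj (β (k + n)) * β (-k - 1) * conj (g k) * g (k + 1)
      - β (k + n) * conj (β (-k - 1)) * g k * conj (g (k + 1)) with hF
  -- key step: F is constant on the region n + 2k < 0
  have key : ∀ k : ℤ, n + 2 * k < 0 → F (k - 1) = F k := by
    intro k hk
    have e := hg k hk
    have e' : conj (g k) * (DeltaN n β (⇑g) k + (m2 : ℂ) * g k)
        - g k * conj (DeltaN n β (⇑g) k + (m2 : ℂ) * g k) = 0 := by
      rw [e]; simp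
    simp only [DeltaN, map_add, map_sub, map_mul, Complex.conj_conj, Complex.conj_ofReal] at e'
    have a1 : k - 1 + n = k + n - 1 := by ring
    have a2 : -(k - 1) - 1 = -k := by ring
    have a3 : k - 1 + 1 = k := by ring
    simp only [hF, a1, a2, a3]
    linear_combination e'
  -- g vanishes far to the left
  obtain ⟨N, hN⟩ : ∃ N : ℤ, ∀ j ≤ N, g j = 0 := by
    refine ⟨(insert (0 : ℤ) g.support).min' (by simp) - 1, fun j hj => ?_⟩
    by_contra h
    have hmem : j ∈ insert (0 : ℤ) g.support := by
      simp [Finsupp.mem_support_iff, h]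
    have := Finset.min'_le _ j hmem
    omega
  set K : ℤ := -t - 1 with hK
  set k₀ : ℤ := min (N - 1) K with hk₀
  have hF0 : F k₀ = 0 := by
    have h1 : g k₀ = 0 := hN _ (by omega)
    have h2 : g (k₀ + 1) = 0 := hN _ (by omega)
    simp [hF, h1, h2]
  have hconst : ∀ d : ℕ, k₀ + d ≤ K → F (k₀ + d) = 0 := by
    intro d
    induction d with
    | zero => intro _; simpa using hF0
    | succ d ih =>
      intro hd
      have hlt : n + 2 * (k₀ + (d + 1 : ℕ)) < 0 := by push_cast; push_cast at hd; omega
      have := key _ hlt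
      have harg : (k₀ + (d + 1 : ℕ)) - 1 = k₀ + d := by push_cast; ring
      rw [harg] at this
      rw [← this]
      exact ih (by push_cast at hd ⊢; omega)
  have hFK : F K = 0 := by
    have hd : k₀ + ((K - k₀).toNat : ℤ) = K := by
      have : k₀ ≤ K := min_le_right _ _
      omega
    have := hconst (K - k₀).toNat (by omega)
    rwa [hd] at this
  -- unfold F at K and finish
  have e1 : (n - 1) / 2 = t := by omega
  have e2 : (1 - n) / 2 = -t := by omega
  have e3 : (-n - 1) / 2 = -t - 1 := by omega
  have e4 : K + n = t := by omega
  have e5 : -K - 1 = t := by omega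
  have e6 : K + 1 = -t := by omega
  rw [e1, e2, e3]
  simp only [hF, e4, e5, e6] at hFK
  have hnorm : ((‖β t‖ ^ 2 : ℝ) : ℂ) = conj (β t) * β t := by
    rw [Complex.conj_mul']; push_cast; ring
  simp only [map_mul, Complex.conj_conj, Complex.conj_ofReal, hnorm]
  linear_combination -hFK
end
end
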